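/- Let N ≥ 2 and j ∈ {1,…,N}. Let v ∈ L²_loc(ℝ^N; ℝ) have a weak gradient ∇v ∈ L²(ℝ^N; ℝ^N), that is, ∫ v ∂_kχ dx = −∫ (∇v)_k χ dx for every χ ∈ C_c^∞(ℝ^N) and every k = 1,…,N. If the j-th weak partial derivative ∂_j v = (∇v)_j belongs to L¹(ℝ^N), then ∫_{ℝ^N} ∂_j v dx = 0. -/

import Mathlib

open MeasureTheory Filter Complex Metric
open scoped ENNReal Topology ComplexConjugate

noncomputable section
/-- `g` is the `j`-th weak partial derivative of the real-valued function `v`. -/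
def IsWeakDerivR {N : ℕ} (j : Fin N) (v g : (Fin N → ℝ) → ℝ) : Prop :=
  ∀ χ : (Fin N → ℝ) → ℝ, ContDiff ℝ (⊤ : ℕ∞) χ → HasCompactSupport χ →
    ∫ x, v x * fderiv ℝ χ x (Pi.single j 1) = -∫ x, g x * χ x
/-- `v ∈ L²_loc(ℝ^N;ℝ)`. -/
def L2loc {N : ℕ} (v : (Fin N → ℝ) → ℝ) : Prop :=
  ∀ K : Set (Fin N → ℝ), IsCompact K → IntegrableOn (fun x => (v x) ^ 2) K volume

/-!
Fix `k ≠ j`. A weak gradient is curl-free: `∫ g_j ∂_k ψ = ∫ g_k ∂_j ψ` for every test function `ψ`.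
Take `ψ = Θ ∘ D_ε` with `Θ ∈ C_c^∞`, `∂_k Θ (0) = 1`, and `D_ε = diag (ε, …, ε^(N+3), …, ε)`
(`ε^(N+3)` in slot `j`), so that `ε ∫ g_j (∂_k Θ ∘ D_ε) = ε^(N+3) ∫ g_k (∂_j Θ ∘ D_ε)`.
As `ε → 0⁺` the left integral tends to `∫ g_j` by dominated convergence, since `g_j ∈ L¹`, while
Cauchy–Schwarz and `‖∂_j Θ ∘ D_ε‖₂ = ε^(-(N+1)) ‖∂_j Θ‖₂` make the right-hand side `O(ε²)`.
-/

section SecondDerivatives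

variable {E F : Type*} [NormedAddCommGroup E] [NormedSpace ℝ E] [NormedAddCommGroup F]
  [NormedSpace ℝ F] {ψ : E → F}

theorem ContDiff.fderiv_apply_const (hψ : ContDiff ℝ (⊤ : ℕ∞) ψ) (w : E) :
    ContDiff ℝ (⊤ : ℕ∞) (fun x => fderiv ℝ ψ x w) :=
  (contDiff_infty_iff_fderiv.1 hψ).2.clm_apply contDiff_const

theorem ContDiff.fderiv_fderiv_apply_comm (hψ : ContDiff ℝ (⊤ : ℕ∞) ψ) (x u w : E) :
    fderiv ℝ (fun y => fderiv ℝ ψ y w) x u = fderiv ℝ (fun y => fderiv ℝ ψ y u) x w := by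
  have hd : Differentiable ℝ (fderiv ℝ ψ) :=
    (contDiff_infty_iff_fderiv.1 hψ).2.differentiable (by simp)
  rw [fderiv_clm_apply (hd x) (differentiableAt_const w),
    fderiv_clm_apply (hd x) (differentiableAt_const u)]
  have h2 : minSmoothness ℝ 2 ≤ ((⊤ : ℕ∞) : WithTop ℕ∞) := by
    rw [minSmoothness_of_isRCLikeNormedField]
    exact WithTop.coe_le_coe.2 le_top
  simpa using hψ.contDiffAt.isSymmSndFDerivAt h2 u w

end SecondDerivatives

theorem exists_contDiff_hasCompactSupport_fderiv_zero_eq {E : Type*} [NormedAddCommGroup E]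
    [NormedSpace ℝ E] [FiniteDimensional ℝ E] (L : E →L[ℝ] ℝ) :
    ∃ Θ : E → ℝ, ContDiff ℝ (⊤ : ℕ∞) Θ ∧ HasCompactSupport Θ ∧ fderiv ℝ Θ 0 = L := by
  let Φ : ContDiffBump (0 : E) := ⟨1, 2, one_pos, one_lt_two⟩
  refine ⟨fun y => L y * Φ y, L.contDiff.mul Φ.contDiff, Φ.hasCompactSupport.mul_left, ?_⟩
  have hΦ : HasFDerivAt (fun y => Φ y) (0 : E →L[ℝ] ℝ) 0 :=
    (hasFDerivAt_const 1 0).congr_of_eventuallyEq Φ.eventuallyEq_one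
  rw [(L.hasFDerivAt.fun_mul hΦ).fderiv]
  simp [Φ.eventuallyEq_one.eq_of_nhds]

section HaarRescaling

variable {E : Type*} [NormedAddCommGroup E] [NormedSpace ℝ E] [MeasurableSpace E] [BorelSpace E]
  [FiniteDimensional ℝ E] (μ : Measure E) [μ.IsAddHaarMeasure] {f : E →L[ℝ] E}

theorem integral_comp_continuousLinearMap {F : Type*} [NormedAddCommGroup F] [NormedSpace ℝ F]
    (hf : f.det ≠ 0) (G : E → F) :
    ∫ x, G (f x) ∂μ = |f.det|⁻¹ • ∫ x, G x ∂μ := by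
  have hemb : MeasurableEmbedding f :=
    (f.toContinuousLinearEquivOfDetNeZero hf).toHomeomorph.measurableEmbedding
  rw [← hemb.integral_map, ← f.coe_coe, Measure.map_linearMap_addHaar_eq_smul_addHaar μ hf,
    integral_smul_measure, ENNReal.toReal_ofReal (abs_nonneg _), abs_inv]

theorem memLp_comp_continuousLinearMap {F : Type*} [NormedAddCommGroup F] {p : ℝ≥0∞}
    (hf : f.det ≠ 0) {G : E → F} (hG : MemLp G p μ) :
    MemLp (fun x => G (f x)) p μ := by
  refine MemLp.comp_of_map ?_ f.continuous.aemeasurable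
  rw [← f.coe_coe, Measure.map_linearMap_addHaar_eq_smul_addHaar μ hf]
  exact hG.smul_measure ENNReal.ofReal_ne_top

theorem abs_integral_mul_comp_continuousLinearMap_le {h G : E → ℝ} (hh : MemLp h 2 μ)
    (hG : MemLp G 2 μ) (hf : f.det ≠ 0) :
    |∫ x, h x * G (f x) ∂μ| ≤ √(∫ x, h x ^ 2 ∂μ) * √(∫ x, G x ^ 2 ∂μ) / √|f.det| := by
  have hsq : ∀ u : E → ℝ, (∫ x, ‖u x‖ ^ (2 : ℝ) ∂μ) ^ (1 / 2 : ℝ) = √(∫ x, u x ^ 2 ∂μ) := by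
    simp [Real.sqrt_eq_rpow]
  calc |∫ x, h x * G (f x) ∂μ| ≤ ∫ x, ‖h x‖ * ‖G (f x)‖ ∂μ := by
        simpa only [Real.norm_eq_abs, abs_mul] using
          abs_integral_le_integral_abs (f := fun x => h x * G (f x))
    _ ≤ √(∫ x, h x ^ 2 ∂μ) * √(∫ x, G (f x) ^ 2 ∂μ) := by
        rw [← hsq h, ← hsq (fun x => G (f x))]
        exact integral_mul_norm_le_Lp_mul_Lq .two_two (by simpa using hh)
          (by simpa using memLp_comp_continuousLinearMap μ hf hG)
    _ = √(∫ x, h x ^ 2 ∂μ) * √(∫ x, G x ^ 2 ∂μ) / √|f.det| := by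
        rw [integral_comp_continuousLinearMap μ hf (fun y => G y ^ 2), smul_eq_mul,
          Real.sqrt_mul' _ (integral_nonneg fun _ => sq_nonneg _), Real.sqrt_inv]
        ring

end HaarRescaling

theorem tendsto_integral_mul_of_tendsto {α ι : Type*} [MeasurableSpace α] {μ : Measure α}
    {l : Filter ι} [l.IsCountablyGenerated] {h : α → ℝ} (hh : Integrable h μ)
    {φ : ι → α → ℝ} {φ₀ : α → ℝ} {C : ℝ} (hφm : ∀ i, AEStronglyMeasurable (φ i) μ)
    (hφC : ∀ i x, ‖φ i x‖ ≤ C) (hφ : ∀ x, Tendsto (fun i => φ i x) l (𝓝 (φ₀ x))) :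
    Tendsto (fun i => ∫ x, h x * φ i x ∂μ) l (𝓝 (∫ x, h x * φ₀ x ∂μ)) := by
  refine tendsto_integral_filter_of_dominated_convergence (fun x => ‖h x‖ * C)
    (.of_forall fun i => hh.aestronglyMeasurable.mul (hφm i)) (.of_forall fun i => ?_)
    (hh.norm.mul_const C) (.of_forall fun x => (hφ x).const_mul (h x))
  exact .of_forall fun x => by
    rw [norm_mul]
    exact mul_le_mul_of_nonneg_left (hφC i x) (norm_nonneg _)

section Diagonal

variable {ι : Type*} [Fintype ι] [DecidableEq ι]

def diagonalCLM (d : ι → ℝ) : (ι → ℝ) →L[ℝ] (ι → ℝ) :=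
  LinearMap.toContinuousLinearMap (Matrix.toLin' (Matrix.diagonal d))

@[simp]
theorem diagonalCLM_apply (d x : ι → ℝ) : diagonalCLM d x = d * x := by
  ext i
  simp [diagonalCLM, Matrix.mulVec_diagonal]

theorem diagonalCLM_single (d : ι → ℝ) (i : ι) :
    diagonalCLM d (Pi.single i 1) = d i • Pi.single i 1 := by
  ext i'
  rcases eq_or_ne i' i with rfl | h <;> simp [*]

theorem det_diagonalCLM (d : ι → ℝ) : (diagonalCLM d).det = ∏ i, d i := by
  simp [diagonalCLM, ContinuousLinearMap.det, LinearMap.det_toLin']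

theorem tendsto_integral_mul_comp_diagonalCLM {α : Type*} {l : Filter α} [l.IsCountablyGenerated]
    {h G : (ι → ℝ) → ℝ} (hh : Integrable h) (hG : Continuous G) (hGc : HasCompactSupport G)
    {d : α → ι → ℝ} (hd : Tendsto d l (𝓝 0)) :
    Tendsto (fun a => ∫ x, h x * G (diagonalCLM (d a) x)) l (𝓝 (∫ x, h x * G 0)) := by
  obtain ⟨C, hC⟩ := hG.bounded_above_of_compact_support hGc
  refine tendsto_integral_mul_of_tendsto hh
    (fun a => (hG.comp (diagonalCLM (d a)).continuous).aestronglyMeasurable) (fun _ _ => hC _)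
    fun x => (hG.tendsto 0).comp ?_
  simpa using hd.mul_const x

end Diagonal

namespace IsWeakDerivR

variable {N : ℕ} {v gj gk : (Fin N → ℝ) → ℝ} {j k : Fin N} {Θ : (Fin N → ℝ) → ℝ}

theorem integral_mul_fderiv_comm (hj : IsWeakDerivR j v gj) (hk : IsWeakDerivR k v gk)
    {ψ : (Fin N → ℝ) → ℝ} (hψ : ContDiff ℝ (⊤ : ℕ∞) ψ) (hψc : HasCompactSupport ψ) :
    ∫ x, gj x * fderiv ℝ ψ x (Pi.single k 1) = ∫ x, gk x * fderiv ℝ ψ x (Pi.single j 1) := by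
  have ej := hj _ (hψ.fderiv_apply_const (Pi.single k 1)) (hψc.fderiv_apply ℝ _)
  have ek := hk _ (hψ.fderiv_apply_const (Pi.single j 1)) (hψc.fderiv_apply ℝ _)
  simp_rw [hψ.fderiv_fderiv_apply_comm _ (Pi.single j 1)] at ej
  exact neg_injective (ej.symm.trans ek)

theorem mul_integral_mul_fderiv_comp_diagonalCLM (hj : IsWeakDerivR j v gj)
    (hk : IsWeakDerivR k v gk) (hΘ : ContDiff ℝ (⊤ : ℕ∞) Θ) (hΘc : HasCompactSupport Θ)
    {d : Fin N → ℝ} (hd : ∏ i, d i ≠ 0) :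
    d k * ∫ x, gj x * fderiv ℝ Θ (diagonalCLM d x) (Pi.single k 1)
      = d j * ∫ x, gk x * fderiv ℝ Θ (diagonalCLM d x) (Pi.single j 1) := by
  have hD : (diagonalCLM d).det ≠ 0 := by rwa [det_diagonalCLM]
  have hψ : ∀ x u, fderiv ℝ (Θ ∘ diagonalCLM d) x u
      = fderiv ℝ Θ (diagonalCLM d x) (diagonalCLM d u) := fun x u => by
    rw [((hΘ.differentiable (by simp) _).hasFDerivAt.comp x
      (diagonalCLM d).hasFDerivAt).fderiv]
    rfl
  have := hj.integral_mul_fderiv_comm hk (hΘ.comp (diagonalCLM d).contDiff)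
    (hΘc.comp_homeomorph ((diagonalCLM d).toContinuousLinearEquivOfDetNeZero hD).toHomeomorph)
  simpa only [hψ, diagonalCLM_single, map_smul, smul_eq_mul, mul_left_comm (gj _),
    mul_left_comm (gk _), integral_const_mul] using this

theorem abs_mul_integral_mul_fderiv_comp_diagonalCLM_le (hj : IsWeakDerivR j v gj)
    (hk : IsWeakDerivR k v gk) (hgk : MemLp gk 2 volume) (hΘ : ContDiff ℝ (⊤ : ℕ∞) Θ)
    (hΘc : HasCompactSupport Θ) {d : Fin N → ℝ} (hd : ∏ i, d i ≠ 0) :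
    |d k| * |∫ x, gj x * fderiv ℝ Θ (diagonalCLM d x) (Pi.single k 1)|
      ≤ |d j| * (√(∫ x, gk x ^ 2) * √(∫ y, fderiv ℝ Θ y (Pi.single j 1) ^ 2) / √|∏ i, d i|) := by
  have hG : MemLp (fun y => fderiv ℝ Θ y (Pi.single j 1)) 2 volume :=
    (hΘ.fderiv_apply_const _).continuous.memLp_of_hasCompactSupport (hΘc.fderiv_apply ℝ _)
  rw [← abs_mul, hj.mul_integral_mul_fderiv_comp_diagonalCLM hk hΘ hΘc hd, abs_mul,
    ← det_diagonalCLM]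
  gcongr
  exact abs_integral_mul_comp_continuousLinearMap_le volume hgk hG (by rwa [det_diagonalCLM])

end IsWeakDerivR

section AnisotropicScaling

variable {N : ℕ} (j : Fin N)

def anisotropicScaling (ε : ℝ) : Fin N → ℝ := fun i => ε * if i = j then ε ^ (N + 2) else 1

theorem prod_anisotropicScaling (ε : ℝ) :
    ∏ i, anisotropicScaling j ε i = (ε ^ (N + 1)) ^ 2 := by
  simp only [anisotropicScaling, Finset.prod_mul_distrib, Finset.prod_const, Finset.card_univ,
    Fintype.card_fin, Finset.prod_ite_eq', Finset.mem_univ, if_true]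
  ring

theorem tendsto_anisotropicScaling : Tendsto (anisotropicScaling j) (𝓝 0) (𝓝 0) := by
  refine Continuous.tendsto' (continuous_pi fun i => ?_) 0 0 (by ext; simp [anisotropicScaling])
  simp only [anisotropicScaling]
  split_ifs <;> fun_prop

end AnisotropicScaling

theorem IsWeakDerivR.tendsto_integral_mul_fderiv_comp_anisotropicScaling {N : ℕ}
    {v gj gk : (Fin N → ℝ) → ℝ} {j k : Fin N} (hkj : k ≠ j) (hj : IsWeakDerivR j v gj)
    (hk : IsWeakDerivR k v gk) (hgk : MemLp gk 2 volume) {Θ : (Fin N → ℝ) → ℝ}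
    (hΘ : ContDiff ℝ (⊤ : ℕ∞) Θ) (hΘc : HasCompactSupport Θ) :
    Tendsto (fun ε => ∫ x, gj x * fderiv ℝ Θ (diagonalCLM (anisotropicScaling j ε) x)
      (Pi.single k 1)) (𝓝[>] 0) (𝓝 0) := by
  set A := √(∫ x, gk x ^ 2) * √(∫ y, fderiv ℝ Θ y (Pi.single j 1) ^ 2)
  refine squeeze_zero_norm' ?_ (tendsto_nhdsWithin_of_tendsto_nhds
    ((continuous_id.mul continuous_const).tendsto' 0 0 (zero_mul A)))
  filter_upwards [self_mem_nhdsWithin] with ε (hε : 0 < ε)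
  have hd : ∏ i, anisotropicScaling j ε i ≠ 0 := by
    rw [prod_anisotropicScaling]
    positivity
  have := hj.abs_mul_integral_mul_fderiv_comp_diagonalCLM_le hk hgk hΘ hΘc hd
  rw [prod_anisotropicScaling] at this
  simp only [anisotropicScaling, hkj, if_true, if_false, mul_one,
    abs_mul, abs_pow, abs_of_pos hε, Real.sqrt_sq (pow_pos hε _).le] at this
  rw [Real.norm_eq_abs]
  refine le_of_mul_le_mul_left ?_ hε
  calc ε * |_| ≤ ε * ε ^ (N + 2) * (A / ε ^ (N + 1)) := this
    _ = ε * (ε * A) := by field_simp; ring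

theorem statement18_general {N : ℕ} (hN : 2 ≤ N) (j : Fin N)
    (v : (Fin N → ℝ) → ℝ) (g : (Fin N → ℝ) → Fin N → ℝ)
    (hgrad : ∀ k, IsWeakDerivR k v (fun x => g x k))
    (hgL2 : ∀ k, MemLp (fun x => g x k) 2 volume)
    (hjL1 : Integrable (fun x => g x j) volume) :
    ∫ x, g x j = 0 := by
  have : Nontrivial (Fin N) := Fin.nontrivial_iff_two_le.2 hN
  obtain ⟨k, hkj⟩ := exists_ne j
  obtain ⟨Θ, hΘ, hΘc, hΘ0⟩ := exists_contDiff_hasCompactSupport_fderiv_zero_eq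
    (ContinuousLinearMap.proj k : (Fin N → ℝ) →L[ℝ] ℝ)
  have hlim := tendsto_integral_mul_comp_diagonalCLM hjL1 (hΘ.fderiv_apply_const _).continuous
    (hΘc.fderiv_apply ℝ (Pi.single k 1))
    ((tendsto_anisotropicScaling j).mono_left (nhdsWithin_le_nhds (s := Set.Ioi 0)))
  rw [hΘ0] at hlim
  simp only [ContinuousLinearMap.proj_apply, Pi.single_eq_same, mul_one] at hlim
  exact tendsto_nhds_unique hlim
    ((hgrad j).tendsto_integral_mul_fderiv_comp_anisotropicScaling hkj (hgrad k) (hgL2 k) hΘ hΘc)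

/-- (Lemma `lema-int`.)  For `N ≥ 2`, if `v ∈ L²_loc(ℝ^N;ℝ)` has a weak
gradient in `L²(ℝ^N;ℝ^N)` and its `j`-th weak partial derivative is integrable, then
`∫ ∂_j v dx = 0`. -/
theorem statement18 {N : ℕ} (hN : 2 ≤ N) (j : Fin N)
    (v : (Fin N → ℝ) → ℝ) (g : (Fin N → ℝ) → Fin N → ℝ)
    (hv : L2loc v)
    (hgrad : ∀ k, IsWeakDerivR k v (fun x => g x k))
    (hgL2 : ∀ k, MemLp (fun x => g x k) 2 volume)
    (hjL1 : Integrable (fun x => g x j) volume) :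
    ∫ x, g x j = 0 :=
  statement18_general hN j v g hgrad hgL2 hjL1
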